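/- arXiv:2605.19407 — 3 statements merged into one kernel-verified Lean document; each statement's English description precedes it below -/
import Mathlib

section
/- Let p₁,...,p_k > 0, let Σ₁,...,Σ_k ∈ ℝ^{d×d} be positive semidefinite with tr(Σ_i Σ_j) = 0 for i ≠ j, let M_{*,i} = u_i v_iᵀ with v_i ∈ range(Σ_i), and set M_* = Σᵢ M_{*,i}, Σ = Σᵢ p_i Σ_i. Then for any matrix M ∈ ℝ^{m×d}, Σᵢ p_i tr((M_{*,i} − M) Σ_i (M_{*,i} − M)ᵀ) = tr((M_* − M) Σ (M_* − M)ᵀ) = ‖(M_* − M) Σ^{1/2}‖_F². -/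
/-!
Two positive semidefinite matrices with `tr (Σᵢ Σⱼ) = 0` multiply to zero: writing them as
`XᴴX` and `YᴴY`, the trace is `‖X Yᴴ‖_F²`. Since the row vector `vᵢ` of the target `uᵢ vᵢᵀ`
lies in `range Σᵢ`, every `Σⱼ` with `j ≠ i` annihilates it, so `(M⋆ − M) Σᵢ = (M⋆ᵢ − M) Σᵢ`
and the objective for `Σ = ∑ pᵢ Σᵢ` splits into the per-task objectives. The Frobenius form
is `tr (B R Rᵀ Bᵀ) = ‖B R‖_F²` for the symmetric square root `R`.
-/

open Matrix

noncomputable def frobSq {m d : ℕ} (A : Matrix (Fin m) (Fin d) ℝ) : ℝ :=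
  ∑ i, ∑ j, (A i j) ^ 2

namespace Matrix

section
open scoped ComplexOrder MatrixOrder

theorem PosSemidef.mul_eq_zero_of_trace_mul_eq_zero {n 𝕜 : Type*} [Fintype n] [RCLike 𝕜]
    {A B : Matrix n n 𝕜} (hA : A.PosSemidef) (hB : B.PosSemidef) (h : (A * B).trace = 0) :
    A * B = 0 := by
  classical
  obtain ⟨X, rfl⟩ := CStarAlgebra.nonneg_iff_eq_star_mul_self.mp hA.nonneg
  obtain ⟨Y, rfl⟩ := CStarAlgebra.nonneg_iff_eq_star_mul_self.mp hB.nonneg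
  simp only [star_eq_conjTranspose] at h ⊢
  have hXY : X * Yᴴ = 0 := by
    rw [← trace_conjTranspose_mul_self_eq_zero_iff, ← h]
    calc ((X * Yᴴ)ᴴ * (X * Yᴴ)).trace = (Y * (Xᴴ * X * Yᴴ)).trace := by
          rw [conjTranspose_mul, conjTranspose_conjTranspose]; simp only [mul_assoc]
      _ = (Xᴴ * X * (Yᴴ * Y)).trace := by rw [trace_mul_comm]; simp only [mul_assoc]
  calc Xᴴ * X * (Yᴴ * Y) = Xᴴ * (X * Yᴴ) * Y := by simp only [mul_assoc]
    _ = 0 := by rw [hXY, mul_zero, zero_mul]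

end

variable {l m n R : Type*} [Fintype n]

theorem vecMulVec_mul_eq_zero_of_mem_range [CommSemiring R] {S T : Matrix n n R}
    (hS : S.IsSymm) (hST : S * T = 0) (u : l → R) {v : n → R}
    (hv : v ∈ LinearMap.range T.mulVecLin) : vecMulVec u v * S = 0 := by
  obtain ⟨w, rfl⟩ := hv
  rw [vecMulVec_mul, ← mulVec_transpose, hS.eq, mulVecLin_apply, mulVec_mulVec, hST,
    zero_mulVec]
  ext
  simp [vecMulVec_apply]

theorem sum_sub_mul_eq_of_mul_eq_zero [Ring R] {ι : Type*} [Fintype ι]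
    (A : ι → Matrix m n R) (S : ι → Matrix n n R) (hAS : ∀ i j, j ≠ i → A j * S i = 0)
    (M : Matrix m n R) (i : ι) : ((∑ j, A j) - M) * S i = (A i - M) * S i := by
  rw [Matrix.sub_mul, Matrix.sub_mul, Matrix.sum_mul,
    Finset.sum_eq_single i (fun j _ hji => hAS i j hji) (by simp)]

theorem trace_mul_sum_smul_mul_transpose [CommRing R] {ι : Type*} [Fintype ι] [Fintype m]
    (B : Matrix m n R) (C : ι → Matrix m n R) (S : ι → Matrix n n R) (hS : ∀ i, (S i).IsSymm)
    (hBC : ∀ i, B * S i = C i * S i) (p : ι → R) :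
    (B * (∑ i, p i • S i) * Bᵀ).trace = ∑ i, p i * (C i * S i * (C i)ᵀ).trace := by
  have hCB : ∀ i, S i * Bᵀ = S i * (C i)ᵀ := fun i => by
    simpa only [transpose_mul, (hS i).eq] using congrArg transpose (hBC i)
  simp only [Matrix.mul_sum, Matrix.sum_mul, trace_sum, Matrix.mul_smul, smul_mul, trace_smul,
    smul_eq_mul]
  refine Finset.sum_congr rfl fun i _ => ?_
  rw [Matrix.mul_assoc, hCB, ← Matrix.mul_assoc, hBC]

end Matrix

theorem trace_mul_transpose_eq_frobSq {m d : ℕ} (A : Matrix (Fin m) (Fin d) ℝ) :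
    (A * Aᵀ).trace = frobSq A := by
  simp [frobSq, trace, mul_apply, sq]

theorem trace_mul_mul_self_mul_transpose_eq_frobSq {m d : ℕ} (B : Matrix (Fin m) (Fin d) ℝ)
    {R : Matrix (Fin d) (Fin d) ℝ} (hR : R.IsSymm) :
    (B * (R * R) * Bᵀ).trace = frobSq (B * R) := by
  rw [← trace_mul_transpose_eq_frobSq, transpose_mul, hR.eq]
  simp only [Matrix.mul_assoc]

theorem multitask_objective_collapse_general {d m k : ℕ}
    (p : Fin k → ℝ)
    (S : Fin k → Matrix (Fin d) (Fin d) ℝ)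
    (hpsd : ∀ i, (S i).PosSemidef)
    (htr : ∀ i j, i ≠ j → (S i * S j).trace = 0)
    (u : Fin k → Fin m → ℝ) (v : Fin k → Fin d → ℝ)
    (hv : ∀ i, v i ∈ LinearMap.range (S i).mulVecLin)
    (R : Matrix (Fin d) (Fin d) ℝ) (hR : R.PosSemidef)
    (hRsq : R * R = ∑ i, p i • S i)
    (M : Matrix (Fin m) (Fin d) ℝ) :
    (∑ i, p i * ((vecMulVec (u i) (v i) - M) * S i *
        (vecMulVec (u i) (v i) - M)ᵀ).trace
      = (((∑ i, vecMulVec (u i) (v i)) - M) * (∑ i, p i • S i) *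
          ((∑ i, vecMulVec (u i) (v i)) - M)ᵀ).trace) ∧
    ((((∑ i, vecMulVec (u i) (v i)) - M) * (∑ i, p i • S i) *
        ((∑ i, vecMulVec (u i) (v i)) - M)ᵀ).trace
      = frobSq (((∑ i, vecMulVec (u i) (v i)) - M) * R)) := by
  have hS i : (S i).IsSymm := isHermitian_iff_isSymm.mp (hpsd i).isHermitian
  have hAS i j (hji : j ≠ i) : vecMulVec (u j) (v j) * S i = 0 :=
    vecMulVec_mul_eq_zero_of_mem_range (hS i)
      ((hpsd i).mul_eq_zero_of_trace_mul_eq_zero (hpsd j) (htr i j hji.symm)) (u j) (hv j)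
  refine ⟨(trace_mul_sum_smul_mul_transpose _ _ S hS
    (sum_sub_mul_eq_of_mul_eq_zero _ S hAS M) p).symm, ?_⟩
  rw [← hRsq]
  exact trace_mul_mul_self_mul_transpose_eq_frobSq _ (isHermitian_iff_isSymm.mp hR.isHermitian)

/-- With orthogonal tasks, the weighted multi-task quadratic objective collapses to a
single-target objective: `∑ i, p i * tr((Mᵢ − M) Σᵢ (Mᵢ − M)ᵀ) = tr((M⋆ − M) Σ (M⋆ − M)ᵀ)
= ‖(M⋆ − M) Σ^{1/2}‖_F²`, where `Σ^{1/2}` is the PSD square root `R` of `Σ`. -/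
theorem multitask_objective_collapse {d m k : ℕ}
    (p : Fin k → ℝ) (hp : ∀ i, 0 < p i)
    (S : Fin k → Matrix (Fin d) (Fin d) ℝ)
    (hpsd : ∀ i, (S i).PosSemidef)
    (htr : ∀ i j, i ≠ j → (S i * S j).trace = 0)
    (u : Fin k → Fin m → ℝ) (v : Fin k → Fin d → ℝ)
    (hv : ∀ i, v i ∈ LinearMap.range (S i).mulVecLin)
    (R : Matrix (Fin d) (Fin d) ℝ) (hR : R.PosSemidef)
    (hRsq : R * R = ∑ i, p i • S i)
    (M : Matrix (Fin m) (Fin d) ℝ) :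
    (∑ i, p i * ((vecMulVec (u i) (v i) - M) * S i *
        (vecMulVec (u i) (v i) - M)ᵀ).trace
      = (((∑ i, vecMulVec (u i) (v i)) - M) * (∑ i, p i • S i) *
          ((∑ i, vecMulVec (u i) (v i)) - M)ᵀ).trace) ∧
    ((((∑ i, vecMulVec (u i) (v i)) - M) * (∑ i, p i • S i) *
        ((∑ i, vecMulVec (u i) (v i)) - M)ᵀ).trace
      = frobSq (((∑ i, vecMulVec (u i) (v i)) - M) * R)) :=
  multitask_objective_collapse_general p S hpsd htr u v hv R hR hRsq M
end

section
/- Characterization of Filter Improvement: if the target conditional P_t(· | x) is the Dirac distribution at y*, then KL(P_t ‖ P_D) − KL(P_t ‖ P_{φ∘D}) = −log( P_D(y* | x) + (1 − P_D(y* | x)) · E_{D|≠y*}[φ(X,Y)] / E_{D|y*}[φ(X,Y)] ), provided all weighted masses involved are nonzero. -/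
open Finset

variable {𝓧 𝓨 : Type*}

/-- Similarity-weighted predictor: `P_D(y ∣ x)` is the `s(x,·)`-weighted fraction of
examples in the dataset `D = {(xd i, yd i)}` with label `y`. -/
noncomputable def PD [DecidableEq 𝓨] {n : ℕ} (s : 𝓧 → 𝓧 → ℝ) (x : 𝓧)
    (xd : Fin n → 𝓧) (yd : Fin n → 𝓨) (y : 𝓨) : ℝ :=
  (∑ i ∈ univ.filter fun i => yd i = y, s x (xd i)) / ∑ i, s x (xd i)

/-- Similarity-weighted predictor on the filtered dataset `φ∘D` (the subset of `D`
where the `{0,1}`-valued filter `φ` equals `1`). -/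
noncomputable def PfD [DecidableEq 𝓨] {n : ℕ} (s : 𝓧 → 𝓧 → ℝ) (x : 𝓧)
    (xd : Fin n → 𝓧) (yd : Fin n → 𝓨) (φ : 𝓧 → 𝓨 → ℝ) (y : 𝓨) : ℝ :=
  (∑ i ∈ univ.filter fun i => yd i = y, s x (xd i) * φ (xd i) (yd i)) /
    ∑ i, s x (xd i) * φ (xd i) (yd i)

/-- `s(x,·)`-weighted average of the filter `φ` over the whole dataset `D`. -/
noncomputable def ED {n : ℕ} (s : 𝓧 → 𝓧 → ℝ) (x : 𝓧)
    (xd : Fin n → 𝓧) (yd : Fin n → 𝓨) (φ : 𝓧 → 𝓨 → ℝ) : ℝ :=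
  (∑ i, s x (xd i) * φ (xd i) (yd i)) / ∑ i, s x (xd i)

/-- `s(x,·)`-weighted average of the filter `φ` over examples with label `y`. -/
noncomputable def EDy [DecidableEq 𝓨] {n : ℕ} (s : 𝓧 → 𝓧 → ℝ) (x : 𝓧)
    (xd : Fin n → 𝓧) (yd : Fin n → 𝓨) (φ : 𝓧 → 𝓨 → ℝ) (y : 𝓨) : ℝ :=
  (∑ i ∈ univ.filter fun i => yd i = y, s x (xd i) * φ (xd i) (yd i)) /
    ∑ i ∈ univ.filter fun i => yd i = y, s x (xd i)

/-- `s(x,·)`-weighted average of the filter `φ` over examples with label `≠ y`. -/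
noncomputable def EDnoty [DecidableEq 𝓨] {n : ℕ} (s : 𝓧 → 𝓧 → ℝ) (x : 𝓧)
    (xd : Fin n → 𝓧) (yd : Fin n → 𝓨) (φ : 𝓧 → 𝓨 → ℝ) (y : 𝓨) : ℝ :=
  (∑ i ∈ univ.filter fun i => yd i ≠ y, s x (xd i) * φ (xd i) (yd i)) /
    ∑ i ∈ univ.filter fun i => yd i ≠ y, s x (xd i)

/-- KL divergence between two distributions on a finite type, with the convention
`0 * log 0 = 0` (automatic since each term is multiplied by `P y`). -/
noncomputable def klDiv {Y : Type*} [Fintype Y] (P Q : Y → ℝ) : ℝ :=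
  ∑ y, P y * Real.log (P y / Q y)

/-- **Characterization of filter improvement.** With a Dirac target at `y⋆`,
`KL(P_t ‖ P_D) − KL(P_t ‖ P_{φ∘D})
  = −log (P_D(y⋆∣x) + (1 − P_D(y⋆∣x)) · E_{D∣≠y⋆}[φ] / E_{D∣y⋆}[φ])`,
provided all weighted masses involved are nonzero. -/
theorem filter_improvement_characterization [DecidableEq 𝓨] [Fintype 𝓨] {n : ℕ}
    (s : 𝓧 → 𝓧 → ℝ) (hs : ∀ a b, 0 ≤ s a b) (x : 𝓧)
    (xd : Fin n → 𝓧) (yd : Fin n → 𝓨) (φ : 𝓧 → 𝓨 → ℝ)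
    (hφ : ∀ a b, φ a b = 0 ∨ φ a b = 1) (ystar : 𝓨)
    (Pt : 𝓨 → ℝ) (hPt : Pt = fun y => if y = ystar then (1 : ℝ) else 0)
    (hW : 0 < ∑ i, s x (xd i))
    (hWy : 0 < ∑ i ∈ Finset.univ.filter fun i => yd i = ystar, s x (xd i))
    (hWnoty : 0 < ∑ i ∈ Finset.univ.filter fun i => yd i ≠ ystar, s x (xd i))
    (hWφ : 0 < ∑ i, s x (xd i) * φ (xd i) (yd i))
    (hWyφ : 0 < ∑ i ∈ Finset.univ.filter fun i => yd i = ystar,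
        s x (xd i) * φ (xd i) (yd i)) :
    klDiv Pt (PD s x xd yd) - klDiv Pt (PfD s x xd yd φ)
      = -Real.log (PD s x xd yd ystar
          + (1 - PD s x xd yd ystar)
            * (EDnoty s x xd yd φ ystar / EDy s x xd yd φ ystar)) := by

  classical
  -- abbreviations
  set W := ∑ i, s x (xd i) with hWdef
  set Wy := ∑ i ∈ Finset.univ.filter fun i => yd i = ystar, s x (xd i) with hWydef
  set Wn := ∑ i ∈ Finset.univ.filter fun i => yd i ≠ ystar, s x (xd i) with hWndef
  set A := ∑ i ∈ Finset.univ.filter fun i => yd i = ystar,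
      s x (xd i) * φ (xd i) (yd i) with hAdef
  set B := ∑ i ∈ Finset.univ.filter fun i => yd i ≠ ystar,
      s x (xd i) * φ (xd i) (yd i) with hBdef
  have hB : 0 ≤ B := by
    apply Finset.sum_nonneg
    intro i _
    rcases hφ (xd i) (yd i) with h | h <;> simp [h, hs]
  have hsplitW : Wy + Wn = W := by
    rw [hWydef, hWndef, hWdef]
    exact Finset.sum_filter_add_sum_filter_not _ _ _
  have hsplitφ : A + B = ∑ i, s x (xd i) * φ (xd i) (yd i) := by
    rw [hAdef, hBdef]
    exact Finset.sum_filter_add_sum_filter_not _ _ _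
  have hAB : 0 < A + B := hsplitφ ▸ hWφ
  -- KL with Dirac target
  have hKL : ∀ Q : 𝓨 → ℝ, klDiv Pt Q = -Real.log (Q ystar) := by
    intro Q
    unfold klDiv
    rw [hPt, Fintype.sum_eq_single ystar]
    · simp [one_div, Real.log_inv]
    · intro y hy; simp [hy]
  have hPDy : PD s x xd yd ystar = Wy / W := rfl
  have hPfDy : PfD s x xd yd φ ystar = A / (A + B) := by
    rw [PfD, hsplitφ]
  have hEDn : EDnoty s x xd yd φ ystar = B / Wn := rfl
  have hEDyv : EDy s x xd yd φ ystar = A / Wy := rfl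
  rw [hKL, hKL, hPDy, hPfDy, hEDn, hEDyv]
  have harg : Wy / W + (1 - Wy / W) * (B / Wn / (A / Wy))
      = (Wy / W) * ((A + B) / A) := by
    have h1 : (1 : ℝ) - Wy / W = Wn / W := by
      field_simp
      linarith [hsplitW]
    rw [h1]
    field_simp
  rw [harg]
  rw [Real.log_mul (by positivity) (by positivity),
    Real.log_div hWy.ne' hW.ne', Real.log_div hAB.ne' hWyφ.ne',
    Real.log_div hWyφ.ne' hAB.ne']
  ring
end

section
/- In the similarity-weighted predictor model with Dirac target at y* and 0 < P_D(y* | x) < 1, filtering strictly improves the KL divergence to the target, i.e., KL(P_t ‖ P_{φ∘D}) < KL(P_t ‖ P_D), if and only if E_{D|≠y*}[φ(X,Y)] < E_{D|y*}[φ(X,Y)] (the false-positive rate of the filter is less than its true-positive rate under the s-weighting). -/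
open Finset

variable {𝓧 𝓨 : Type*}

/-- **Strict filter improvement.** With a Dirac target at `y⋆` and `0 < P_D(y⋆∣x) < 1`,
filtering strictly improves the KL divergence to the target iff the (s-weighted)
false-positive rate of the filter is below its true-positive rate:
`KL(P_t ‖ P_{φ∘D}) < KL(P_t ‖ P_D) ↔ E_{D∣≠y⋆}[φ] < E_{D∣y⋆}[φ]`. -/
theorem filter_strict_improvement_iff [DecidableEq 𝓨] [Fintype 𝓨] {n : ℕ}
    (s : 𝓧 → 𝓧 → ℝ) (hs : ∀ a b, 0 ≤ s a b) (x : 𝓧)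
    (xd : Fin n → 𝓧) (yd : Fin n → 𝓨) (φ : 𝓧 → 𝓨 → ℝ)
    (hφ : ∀ a b, φ a b = 0 ∨ φ a b = 1) (ystar : 𝓨)
    (Pt : 𝓨 → ℝ) (hPt : Pt = fun y => if y = ystar then (1 : ℝ) else 0)
    (hW : 0 < ∑ i, s x (xd i))
    (hWy : 0 < ∑ i ∈ Finset.univ.filter fun i => yd i = ystar, s x (xd i))
    (hWnoty : 0 < ∑ i ∈ Finset.univ.filter fun i => yd i ≠ ystar, s x (xd i))
    (hWφ : 0 < ∑ i, s x (xd i) * φ (xd i) (yd i))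
    (hWyφ : 0 < ∑ i ∈ Finset.univ.filter fun i => yd i = ystar,
        s x (xd i) * φ (xd i) (yd i))
    (hP0 : 0 < PD s x xd yd ystar) (hP1 : PD s x xd yd ystar < 1) :
    klDiv Pt (PfD s x xd yd φ) < klDiv Pt (PD s x xd yd)
      ↔ EDnoty s x xd yd φ ystar < EDy s x xd yd φ ystar := by

  have hφ0 : ∀ a b, 0 ≤ φ a b := by
    intro a b; rcases hφ a b with h | h <;> simp [h]
  have hWsplit : (∑ i, s x (xd i)) =
      (∑ i ∈ univ.filter fun i => yd i = ystar, s x (xd i)) +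
      (∑ i ∈ univ.filter fun i => yd i ≠ ystar, s x (xd i)) :=
    (Finset.sum_filter_add_sum_filter_not _ _ _).symm
  have hWφsplit : (∑ i, s x (xd i) * φ (xd i) (yd i)) =
      (∑ i ∈ univ.filter fun i => yd i = ystar, s x (xd i) * φ (xd i) (yd i)) +
      (∑ i ∈ univ.filter fun i => yd i ≠ ystar, s x (xd i) * φ (xd i) (yd i)) :=
    (Finset.sum_filter_add_sum_filter_not _ _ _).symm
  have hBφ0 : 0 ≤ ∑ i ∈ univ.filter fun i => yd i ≠ ystar, s x (xd i) * φ (xd i) (yd i) :=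
    Finset.sum_nonneg fun i _ => mul_nonneg (hs _ _) (hφ0 _ _)
  have hPfD0 : 0 < PfD s x xd yd φ ystar := div_pos hWyφ hWφ
  have key : ∀ Q : 𝓨 → ℝ, klDiv Pt Q = - Real.log (Q ystar) := by
    intro Q
    rw [klDiv, hPt, Fintype.sum_eq_single ystar]
    · simp [one_div, Real.log_inv]
    · intro y hy; simp [hy]
  rw [key, key, neg_lt_neg_iff, Real.log_lt_log_iff hP0 hPfD0]
  unfold PD PfD EDy EDnoty
  rw [hWsplit, hWφsplit, div_lt_div_iff₀ (by linarith) (by linarith),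
    div_lt_div_iff₀ hWnoty hWy]
  constructor <;> intro h <;> nlinarith
end
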